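/- If G is a limit group with d(G) = 2, then G is either a free group of rank 2 or a free abelian group of rank 2. -/

import Mathlib

open scoped TensorProduct

/-- A group is fully residually free if every finite subset is mapped injectively
by some homomorphism to a free group. -/
def FullyResiduallyFree (G : Type*) [Group G] : Prop :=
  ∀ T : Finset G, ∃ (α : Type) (f : G →* FreeGroup α), Set.InjOn f T

/-- The rational rank `rk_Q(G) = dim_Q (G^ab ⊗_Z Q)`. -/
noncomputable def rkQ (G : Type*) [Group G] : ℕ :=
  Module.finrank ℚ (ℚ ⊗[ℤ] Additive (Abelianization G))

/-- The minimal number of generators of a group. -/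
noncomputable def d (G : Type*) [Group G] : ℕ :=
  sInf {n | ∃ S : Finset G, S.card = n ∧ Subgroup.closure (S : Set G) = ⊤}

/-!
Let `a, b` generate `G`. If they commute, `G` is a finitely generated abelian group, torsion-free
because free groups are, hence free abelian of rank `d G = 2`. Otherwise some homomorphism `f` to a
free group separates `ab` from `ba`. By Nielsen–Schreier `⟨f a, f b⟩` is free; counting
homomorphisms to `ℤ/2` shows its rank is at most 2, and it is at least 2 as it is not abelian.
So `F₂ → G → ⟨f a, f b⟩ ≅ F₂` is a surjective endomorphism of `F₂`, which is injective since free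
groups are residually finite and hence Hopfian. Thus `F₂ → G` is an isomorphism.
-/

open Function Subgroup

instance MonoidHom.finite_of_fg {G H : Type*} [Group G] [Group.FG G] [Monoid H] [Finite H] :
    Finite (G →* H) := by
  obtain ⟨S, hS, hfin⟩ := Group.fg_iff.mp ‹_›
  have := hfin.to_subtype
  exact .of_injective (fun f : G →* H => S.domRestrict f) fun f g hfg =>
    MonoidHom.eq_of_eqOn_dense hS fun x hx => congrFun hfg ⟨x, hx⟩

theorem Group.injective_of_surjective_of_residuallyFinite {G : Type*} [Group G] [Group.FG G]
    [Group.ResiduallyFinite G] {φ : G →* G} (hφ : Surjective φ) : Injective φ := by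
  refine (injective_iff_map_eq_one φ).mpr fun w hw => by_contra fun hw1 => ?_
  obtain ⟨N, hwN⟩ := Group.exists_finiteIndexNormalSubgroup_notMem w hw1
  have hcomp : Injective fun ψ : G →* G ⧸ N.toSubgroup => ψ.comp φ :=
    fun _ _ h => (MonoidHom.cancel_right hφ).mp h
  -- precomposition with `φ` is an injective self-map of the finite set `Hom(G, G ⧸ N)`
  obtain ⟨ψ, hψ⟩ := Finite.surjective_of_injective hcomp (QuotientGroup.mk' N.toSubgroup)
  have : (w : G ⧸ N.toSubgroup) = 1 := by
    rw [← QuotientGroup.mk'_apply, ← hψ, MonoidHom.comp_apply, hw, map_one]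
  exact hwN ((QuotientGroup.eq_one_iff w).mp this)

theorem Finset.exists_perm_apply_eq_mul_left {G : Type*} [Group G] (X : Finset G) (g : G) :
    ∃ σ : Equiv.Perm X, ∀ x : X, g * x ∈ X → (σ x : G) = g * x := by
  classical
  let e : {x : X // g * x ∈ X} ≃ {y : X // g⁻¹ * y ∈ X} :=
    { toFun := fun x => ⟨⟨g * x, x.2⟩, by simp [x.1.2]⟩
      invFun := fun y => ⟨⟨g⁻¹ * y, y.2⟩, by simp [y.1.2]⟩
      left_inv := fun x => by ext; simp
      right_inv := fun y => by ext; simp }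
  exact ⟨e.extendSubtype, fun x hx => by rw [e.extendSubtype_apply_of_mem x hx]; rfl⟩

theorem commute_of_closure_eq_top {G : Type*} [Group G] {s : Set G} (hs : closure s = ⊤)
    (hcomm : s.Pairwise Commute) (g h : G) : Commute g h :=
  have hcomm' : ∀ x ∈ s, ∀ y ∈ s, x * y = y * x := fun x hx y hy =>
    (eq_or_ne x y).elim (fun hxy => by rw [hxy]) (hcomm hx hy)
  Set.centralizer_centralizer_comm_of_comm hcomm'
    g (closure_le_centralizer_centralizer s (hs ▸ mem_top g))
    h (closure_le_centralizer_centralizer s (hs ▸ mem_top h))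

namespace FreeGroup

variable {α : Type*}

theorem exists_hom_finset_perm_ne_one {w : FreeGroup α} (hw : w ≠ 1) :
    ∃ (X : Finset (FreeGroup α)) (φ : FreeGroup α →* Equiv.Perm X), φ w ≠ 1 := by
  classical
  set L := w.toWord
  let X : Finset (FreeGroup α) := (L.tails.map mk).toFinset
  have hX : ∀ t, t <:+ L → mk t ∈ X := fun t ht => by simpa [X] using ⟨t, ht, rfl⟩
  choose σ hσ using fun a => X.exists_perm_apply_eq_mul_left (of a)
  let x₁ : X := ⟨mk [], hX [] List.nil_suffix⟩
  -- reading a suffix of `w` from the right, each letter moves `x₁` by a left multiplication that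
  -- stays inside `X`, where `σ a` agrees with `of a * ·`
  have hsuffix : ∀ t, t <:+ L → (lift σ (mk t) x₁ : FreeGroup α) = mk t := by
    intro t ht
    induction t with
    | nil => rfl
    | cons p t ih =>
      obtain ⟨a, b⟩ := p
      have ht' : t <:+ L := (List.suffix_cons _ t).trans ht
      have hy : (lift σ (mk t) x₁ : FreeGroup α) = mk t := ih ht'
      rw [← List.singleton_append, ← mul_mk, _root_.map_mul, Equiv.Perm.mul_apply]
      cases b
      · change ((lift σ (of a)⁻¹) _ : FreeGroup α) = (of a)⁻¹ * mk t
        have hmem : (of a)⁻¹ * mk t ∈ X := hX _ ht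
        have hz : σ a ⟨_, hmem⟩ = lift σ (mk t) x₁ := Subtype.ext <| by
          rw [hσ a _ (by simpa [hy] using hX t ht'), hy, mul_inv_cancel_left]
        rw [_root_.map_inv, lift_apply_of, ← hz, Equiv.Perm.inv_def, Equiv.symm_apply_apply]
      · change ((lift σ (of a)) _ : FreeGroup α) = of a * mk t
        rw [lift_apply_of, hσ a _ (by rw [hy]; exact hX _ ht), hy]
  refine ⟨X, lift σ, fun h => hw ?_⟩
  have hw' := hsuffix L (List.suffix_refl L)
  rw [mk_toWord, h] at hw'
  exact hw'.symm

instance : Group.ResiduallyFinite (FreeGroup α) :=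
  Group.residuallyFinite_of_forall_exists_finite_monoidHom fun _ hw =>
    let ⟨X, φ, hφ⟩ := exists_hom_finset_perm_ne_one hw
    ⟨Equiv.Perm X, inferInstance, inferInstance, φ, hφ⟩

theorem commute_of_subsingleton [Subsingleton α] (u v : FreeGroup α) : Commute u v :=
  commute_of_closure_eq_top (closure_range_of α)
    ((Set.subsingleton_range of).pairwise Commute) u v

theorem finite_and_card_le_of_surjective {β : Type*} [Finite α] {φ : FreeGroup α →* FreeGroup β}
    (hφ : Surjective φ) : Finite β ∧ Nat.card β ≤ Nat.card α := by
  let M := Multiplicative (ZMod 2)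
  -- homomorphisms to `ZMod 2` are counted by functions on the generators
  have hinj : Injective fun f : β → M => (lift.symm ((lift f).comp φ) : α → M) :=
    fun f g h => lift.injective ((MonoidHom.cancel_right hφ).mp (lift.symm.injective h))
  have : Finite (β → M) := .of_injective _ hinj
  have hβ : Finite β := not_infinite_iff_finite.mp fun _ => not_finite (β → M)
  have hpow := Nat.card_le_card_of_injective _ hinj
  rw [Nat.card_fun, Nat.card_fun, show Nat.card M = 2 from Nat.card_zmod 2] at hpow
  exact ⟨hβ, (Nat.pow_le_pow_iff_right (by norm_num)).mp hpow⟩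

theorem injective_of_not_commute {β : Type*} {ψ : FreeGroup (Fin 2) →* FreeGroup β}
    (h : ¬Commute (ψ (of 0)) (ψ (of 1))) : Injective ψ := by
  -- the image of `ψ` is free by Nielsen–Schreier
  let e := IsFreeGroup.toFreeGroup ψ.range
  let ρ := e.toMonoidHom.comp ψ.rangeRestrict
  have hρ : Surjective ρ := e.surjective.comp ψ.rangeRestrict_surjective
  obtain ⟨_, hle⟩ := finite_and_card_le_of_surjective hρ
  have hgen : ¬Subsingleton (IsFreeGroup.Generators ψ.range) := fun _ => h <| by
    simpa [ρ] using ((commute_of_subsingleton (ρ (of 0)) (ρ (of 1))).map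
      e.symm.toMonoidHom).map ψ.range.subtype
  have hcard : Nat.card (IsFreeGroup.Generators ψ.range) = 2 := by
    rw [← Finite.card_le_one_iff_subsingleton] at hgen
    rw [Nat.card_fin] at hle
    omega
  let c := freeGroupCongr (Finite.equivFinOfCardEq hcard)
  have hθ : Injective (c.toMonoidHom.comp ρ) :=
    Group.injective_of_surjective_of_residuallyFinite (c.surjective.comp hρ)
  simp only [ρ, MonoidHom.coe_comp] at hθ
  exact MonoidHom.rangeRestrict_injective_iff.mp hθ.of_comp.of_comp

end FreeGroup

section CommGroup

variable {G : Type*} [CommGroup G]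

theorem Subgroup.closure_eq_top_iff_span_int_eq_top {S : Set G} :
    closure S = ⊤ ↔ Submodule.span ℤ (Additive.toMul ⁻¹' S) = ⊤ := by
  rw [← Submodule.toAddSubgroup_inj, Submodule.span_int_eq_addSubgroupClosure,
    ← toAddSubgroup_closure]
  simp

instance [Group.FG G] : Module.Finite ℤ (Additive G) :=
  Module.Finite.iff_addGroup_fg.mpr inferInstance

theorem Group.rank_eq_finrank_int [Group.FG G] [IsMulTorsionFree G] :
    Group.rank G = Module.finrank ℤ (Additive G) := by
  classical
  apply le_antisymm
  · let b := Module.finBasis ℤ (Additive G)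
    calc Group.rank G ≤ (Finset.univ.image fun i => (b i).toMul).card := by
          refine Group.rank_le (closure_eq_top_iff_span_int_eq_top.mpr ?_)
          convert b.span_eq
          ext; simp
      _ ≤ Module.finrank ℤ (Additive G) := Finset.card_image_le.trans (by simp)
  · obtain ⟨S, hcard, hS⟩ := Group.rank_spec G
    let T := S.map Additive.ofMul.toEmbedding
    have hT : Submodule.span ℤ (T : Set (Additive G)) = ⊤ := by
      convert closure_eq_top_iff_span_int_eq_top.mp hS
      ext; simp [T]
    calc Module.finrank ℤ (Additive G) = Set.finrank ℤ (T : Set (Additive G)) := by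
          rw [Set.finrank, hT, finrank_top]
      _ ≤ T.card := finrank_span_finset_le_card T
      _ = Group.rank G := by simp [T, hcard]

theorem CommGroup.nonempty_mulEquiv_pi_int_rank [Group.FG G] [IsMulTorsionFree G] :
    Nonempty (G ≃* Multiplicative (Fin (Group.rank G) → ℤ)) :=
  let b := Module.finBasisOfFinrankEq ℤ (Additive G) Group.rank_eq_finrank_int.symm
  ⟨(MulEquiv.multiplicativeAdditive G).symm.trans b.equivFun.toAddEquiv.toMultiplicative⟩

end CommGroup

theorem d_eq_rank (G : Type*) [Group G] [Group.FG G] : d G = Group.rank G := by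
  have hrank : Group.rank G ∈ {n | ∃ S : Finset G, S.card = n ∧ closure (S : Set G) = ⊤} :=
    Group.rank_spec G
  obtain ⟨S, hcard, hS⟩ := Nat.sInf_mem ⟨_, hrank⟩
  exact le_antisymm (Nat.sInf_le hrank) ((Group.rank_le hS).trans_eq hcard)

namespace FullyResiduallyFree

variable {G : Type*} [Group G]

theorem exists_map_ne (hG : FullyResiduallyFree G) {g h : G} (hgh : g ≠ h) :
    ∃ (α : Type) (f : G →* FreeGroup α), f g ≠ f h := by
  classical
  obtain ⟨α, f, hf⟩ := hG {g, h}
  exact ⟨α, f, fun hfgh => hgh (hf (by simp) (by simp) hfgh)⟩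

theorem isMulTorsionFree (hG : FullyResiduallyFree G) : IsMulTorsionFree G where
  pow_left_injective _ hn g h hgh := by_contra fun hne => by
    obtain ⟨α, f, hf⟩ := hG.exists_map_ne hne
    exact hf (IsMulTorsionFree.pow_left_injective hn (by simpa using congrArg f hgh))

end FullyResiduallyFree

theorem limitGroup_d_eq_two (G : Type*) [Group G] [Group.FG G]
    (hG : FullyResiduallyFree G) (h2 : d G = 2) :
    Nonempty (G ≃* FreeGroup (Fin 2)) ∨ Nonempty (G ≃* Multiplicative (Fin 2 → ℤ)) := by
  classical
  rw [d_eq_rank] at h2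
  obtain ⟨S, hcard, hS⟩ := Group.rank_spec G
  obtain ⟨a, b, -, rfl⟩ := Finset.card_eq_two.mp (hcard.trans h2)
  have hab : closure {a, b} = ⊤ := by simpa using hS
  by_cases hcomm : Commute a b
  · right
    have hcomm' : Set.Pairwise {a, b} Commute := Set.pairwise_pair.mpr fun _ => ⟨hcomm, hcomm.symm⟩
    let _ : CommGroup G := { mul_comm := commute_of_closure_eq_top hab hcomm' }
    have := hG.isMulTorsionFree
    exact h2 ▸ CommGroup.nonempty_mulEquiv_pi_int_rank
  · left
    obtain ⟨α, f, hf⟩ := hG.exists_map_ne hcomm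
    let π := FreeGroup.lift ![a, b]
    have hπ : Surjective π := by
      rw [← MonoidHom.range_eq_top, FreeGroup.range_lift_eq_closure, Matrix.range_cons_cons_empty]
      exact hab
    have hinj : Injective (f ∘ π) := by
      rw [← MonoidHom.coe_comp]
      exact FreeGroup.injective_of_not_commute (by simpa [π, Commute, SemiconjBy] using hf)
    exact ⟨(MulEquiv.ofBijective π ⟨hinj.of_comp, hπ⟩).symm⟩
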